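/- arXiv:1511.01705 — 4 statements merged into one kernel-verified Lean document; each statement's English description precedes it below -/
import Mathlib

section
/- Let q ≥ 2 be an integer and let f : 𝔽₂ⁿ → ℤ_q be a regular gbent function with dual f*. Then f* is also a gbent function (in fact regular), and the dual of f* is f, i.e. (f*)* = f. -/
/-!
Walsh–Hadamard inversion on `𝔽₂ⁿ`: `Σₓ H_f(x) (−1)^⟨u,x⟩ = 2ⁿ ζ^{f(u)}`, by orthogonality of
the characters `x ↦ (−1)^⟨x,v⟩`. Substituting `H_f(x) = 2^{n/2} ζ^{f*(x)}` gives
`H_{f*}(u) = 2^{n/2} ζ^{f(u)}`, so `f` is the dual of `f*`; and a function that has a dual is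
regular gbent because `|ζ| = 1`.
-/

open scoped BigOperators

/-- `ζ_q = e^{2πi/q}`. -/
noncomputable def zeta (q : ℕ) : ℂ := Complex.exp (2 * Real.pi * Complex.I / q)

/-- The standard inner product `⟨u,x⟩ = Σᵢ uᵢxᵢ` on `𝔽₂ⁿ`. -/
def ip {n : ℕ} (u x : Fin n → ZMod 2) : ZMod 2 := ∑ i, u i * x i

/-- The generalized Walsh–Hadamard transform
`H_f(u) = Σ_x ζ_q^{f(x)} (−1)^{⟨u,x⟩}` of `f : 𝔽₂ⁿ → ℤ_q`. -/
noncomputable def gWHT {n q : ℕ} (f : (Fin n → ZMod 2) → ZMod q) (u : Fin n → ZMod 2) : ℂ :=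
  ∑ x : Fin n → ZMod 2, zeta q ^ (f x).val * (-1 : ℂ) ^ (ip u x).val

/-- `f` is gbent if `|H_f(u)| = 2^{n/2}` for all `u`. -/
def IsGbent {n q : ℕ} (f : (Fin n → ZMod 2) → ZMod q) : Prop :=
  ∀ u, ‖gWHT f u‖ = (2 : ℝ) ^ ((n : ℝ) / 2)

/-- `g` is the dual of `f`: `H_f(u) = 2^{n/2} ζ_q^{g(u)}` for all `u`. -/
def IsDualOf {n q : ℕ} (g f : (Fin n → ZMod 2) → ZMod q) : Prop :=
  ∀ u, gWHT f u = ((2 : ℝ) ^ ((n : ℝ) / 2) : ℝ) * zeta q ^ (g u).val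

/-- `f` is a regular gbent function:
`H_f(u) = 2^{n/2} ζ_q^{j_u}` for some `j_u ∈ ℤ_q`, for every `u`. -/
def IsRegularGbent {n q : ℕ} (f : (Fin n → ZMod 2) → ZMod q) : Prop :=
  IsGbent f ∧ ∀ u, ∃ j : ZMod q, gWHT f u = ((2 : ℝ) ^ ((n : ℝ) / 2) : ℝ) * zeta q ^ j.val

/-- The orthogonal complement of a subspace `U ⊆ 𝔽₂ⁿ` w.r.t. `⟨·,·⟩`. -/
def orthComp {n : ℕ} (U : Submodule (ZMod 2) (Fin n → ZMod 2)) : Set (Fin n → ZMod 2) :=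
  {u | ∀ x ∈ U, ip u x = 0}

/-- `F : 𝔽₂ⁿ → ℤ_q^m` is vectorial gbent if every component function
`c·F`, `c ≠ 0`, is gbent. -/
def IsVectorialGbent {n q m : ℕ} (F : (Fin n → ZMod 2) → Fin m → ZMod q) : Prop :=
  ∀ c : Fin m → ZMod q, c ≠ 0 → IsGbent (fun x => ∑ j, c j * F x j)

lemma neg_one_pow_zmod_two_val_add {R : Type*} [Ring R] (a b : ZMod 2) :
    (-1 : R) ^ (a + b).val = (-1) ^ a.val * (-1) ^ b.val := by
  rw [ZMod.val_add, ← neg_one_pow_eq_pow_mod_two, pow_add]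

lemma ip_comm {n : ℕ} (u x : Fin n → ZMod 2) : ip u x = ip x u := by
  simp only [ip, mul_comm]

lemma ip_add_left {n : ℕ} (x y u : Fin n → ZMod 2) : ip (x + y) u = ip x u + ip y u := by
  simp only [ip, Pi.add_apply, add_mul, Finset.sum_add_distrib]

lemma ip_single_one_left {n : ℕ} (i : Fin n) (v : Fin n → ZMod 2) :
    ip (Pi.single i 1) v = v i := by
  simp [ip, Pi.single_apply]

lemma ip_add_right {n : ℕ} (x y u : Fin n → ZMod 2) : ip x (y + u) = ip x y + ip x u := by
  rw [ip_comm, ip_add_left, ip_comm y, ip_comm u]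

lemma norm_zeta (q : ℕ) : ‖zeta q‖ = 1 := by
  rw [zeta, Complex.norm_exp]
  simp [Complex.div_re]

lemma sum_neg_one_pow_ip {n : ℕ} (v : Fin n → ZMod 2) :
    ∑ x : Fin n → ZMod 2, (-1 : ℂ) ^ (ip x v).val = if v = 0 then 2 ^ n else 0 := by
  split_ifs with hv
  · simp [hv, ip]
  obtain ⟨i, hi⟩ : ∃ i, v i ≠ 0 := Function.ne_iff.mp hv
  have hvi : v i = 1 := (by decide : ∀ a : ZMod 2, a ≠ 0 → a = 1) _ hi
  refine Finset.sum_ninvolution (· + Pi.single i 1) (fun x => ?_) (fun x _ h => ?_)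
    (fun _ => Finset.mem_univ _) (fun x => ?_)
  · rw [ip_add_left, ip_single_one_left, hvi, neg_one_pow_zmod_two_val_add]
    simp [ZMod.val_one]
  · simpa using congrFun h i
  · funext j
    simp only [Pi.add_apply, add_assoc, CharTwo.add_self_eq_zero, add_zero]

lemma sum_gWHT_mul_neg_one_pow_ip {n q : ℕ} (f : (Fin n → ZMod 2) → ZMod q)
    (u : Fin n → ZMod 2) :
    ∑ x, gWHT f x * (-1 : ℂ) ^ (ip u x).val = 2 ^ n * zeta q ^ (f u).val := by
  have hdiag (y : Fin n → ZMod 2) : y + u = 0 ↔ y = u := by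
    rw [add_eq_zero_iff_eq_neg, show -u = u from funext fun i => ZMod.neg_eq_self_mod_two (u i)]
  calc ∑ x, gWHT f x * (-1 : ℂ) ^ (ip u x).val
      = ∑ y, zeta q ^ (f y).val * ∑ x, (-1 : ℂ) ^ (ip x (y + u)).val := by
        simp only [gWHT, Finset.sum_mul, Finset.mul_sum]
        rw [Finset.sum_comm]
        refine Finset.sum_congr rfl fun y _ => Finset.sum_congr rfl fun x _ => ?_
        rw [ip_add_right, neg_one_pow_zmod_two_val_add, ip_comm u x, mul_assoc]
    _ = 2 ^ n * zeta q ^ (f u).val := by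
        simp [sum_neg_one_pow_ip, hdiag, mul_comm]

lemma two_rpow_half_mul_self (n : ℕ) :
    (2 : ℝ) ^ ((n : ℝ) / 2) * (2 : ℝ) ^ ((n : ℝ) / 2) = 2 ^ n := by
  rw [← Real.rpow_add two_pos, add_halves, Real.rpow_natCast]

theorem IsDualOf.symm {n q : ℕ} {g f : (Fin n → ZMod 2) → ZMod q} (h : IsDualOf g f) :
    IsDualOf f g := by
  intro u
  set C : ℂ := (((2 : ℝ) ^ ((n : ℝ) / 2) : ℝ) : ℂ)
  have hC : C ≠ 0 := Complex.ofReal_ne_zero.mpr (Real.rpow_pos_of_pos two_pos _).ne'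
  have hCC : C * C = 2 ^ n := by
    rw [← Complex.ofReal_mul, two_rpow_half_mul_self, Complex.ofReal_pow, Complex.ofReal_ofNat]
  have hg (x : Fin n → ZMod 2) : zeta q ^ (g x).val = C⁻¹ * gWHT f x := by
    rw [h x, inv_mul_cancel_left₀ hC]
  calc gWHT g u = ∑ x, C⁻¹ * gWHT f x * (-1 : ℂ) ^ (ip u x).val := by
        simp only [gWHT.eq_1 g, hg]
    _ = C⁻¹ * (2 ^ n * zeta q ^ (f u).val) := by
        simp only [mul_assoc, ← Finset.mul_sum, sum_gWHT_mul_neg_one_pow_ip]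
    _ = C * zeta q ^ (f u).val := by
        rw [← hCC, mul_assoc, inv_mul_cancel_left₀ hC]

theorem IsDualOf.isRegularGbent {n q : ℕ} {g f : (Fin n → ZMod 2) → ZMod q}
    (h : IsDualOf g f) : IsRegularGbent f := by
  refine ⟨fun u => ?_, fun u => ⟨g u, h u⟩⟩
  rw [h u, norm_mul, norm_pow, norm_zeta, one_pow, mul_one, Complex.norm_real,
    Real.norm_of_nonneg (Real.rpow_nonneg zero_le_two _)]

theorem stmt1_general (n q : ℕ) (f fstar : (Fin n → ZMod 2) → ZMod q)
    (hdual : IsDualOf fstar f) :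
    IsRegularGbent fstar ∧ IsDualOf f fstar :=
  ⟨hdual.symm.isRegularGbent, hdual.symm⟩

/-- if `f` is a regular gbent function with dual `f*`, then `f*` is
also a (regular) gbent function and `(f*)* = f`. -/
theorem stmt1 (n q : ℕ) (hq : 2 ≤ q) (f fstar : (Fin n → ZMod 2) → ZMod q)
    (hf : IsGbent f) (hdual : IsDualOf fstar f) :
    IsRegularGbent fstar ∧ IsDualOf f fstar :=
  stmt1_general n q f fstar hdual
end

section
/- Let a, b ∈ 𝔽_{2^m}* with a ≠ b. Then the function f : 𝔽_{2^m} × 𝔽_{2^m} → ℤ₄ given by f(x,y) = Tr_m(ax/y) + 2·Tr_m(bx/y), with the convention 1/0 = 0, is a gbent function in 2m variables. -/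
open scoped BigOperators

noncomputable instance (p n : ℕ) [Fact p.Prime] : Fintype (GaloisField p n) :=
  Fintype.ofFinite _

/-- The absolute trace `Tr_m : 𝔽_{2^m} → 𝔽₂`. -/
noncomputable def tr (m : ℕ) (x : GaloisField 2 m) : ZMod 2 :=
  Algebra.trace (ZMod 2) (GaloisField 2 m) x

/-- The generalized Walsh–Hadamard transform of `f : 𝔽_{2^m} × 𝔽_{2^m} → ℤ_q`,
using the inner product `⟨(x₁,y₁),(x₂,y₂)⟩ = Tr_m(x₁x₂ + y₁y₂)`. -/
noncomputable def gWHT2 {m q : ℕ} (f : GaloisField 2 m × GaloisField 2 m → ZMod q)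
    (u : GaloisField 2 m × GaloisField 2 m) : ℂ :=
  ∑ x : GaloisField 2 m × GaloisField 2 m,
    zeta q ^ (f x).val * (-1 : ℂ) ^ (tr m (u.1 * x.1 + u.2 * x.2)).val

/-!
With `ψ(w) = (-1)^{Tr(w)}`, the identity `i^{s + 2t} = (1+i)/2 · (-1)^t + (1-i)/2 · (-1)^{s+t}`
for `s, t ∈ {0, 1}` splits `H_f(u)` into `(1+i)/2 · S_b(u) + (1-i)/2 · S_{a+b}(u)`, where
`S_c(u) = ∑_{x,y} ψ(cx/y + u₁x + u₂y)`. Summing over `x` first, only the `y` with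
`c/y = -u₁` survives (for `u₁ = 0` this is `y = 0`, because `1/0 = 0`), so `S_c(u) = ±2^m`
when `c ≠ 0`; and `(1+i)/2 · ε₁ + (1-i)/2 · ε₂` has modulus one for all signs `ε₁, ε₂`.
-/

open Complex

section InverseSum

variable {F : Type*} [Field F]

theorem div_add_eq_zero_iff_eq_neg_div {c : F} (hc : c ≠ 0) (u y : F) :
    c / y + u = 0 ↔ y = -(c / u) := by
  rcases eq_or_ne u 0 with rfl | hu
  · simp [hc]
  rcases eq_or_ne y 0 with rfl | hy
  · simp [hu, hc, eq_comm]
  rw [add_eq_zero_iff_eq_neg, div_eq_iff hy, ← neg_div, eq_div_iff hu]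
  constructor <;> intro h <;> linear_combination h

theorem AddChar.sum_mul_div_add_eq [Fintype F] {R : Type*} [CommRing R] [IsDomain R]
    {ψ : AddChar F R} (hψ : ψ.IsPrimitive) {c : F} (hc : c ≠ 0) (u₁ u₂ : F) :
    ∑ p : F × F, ψ (c * p.1 / p.2 + (u₁ * p.1 + u₂ * p.2))
      = Fintype.card F * ψ (u₂ * -(c / u₁)) := by
  classical
  have inner (y : F) : ∑ x : F, ψ (c * x / y + (u₁ * x + u₂ * y))
      = if y = -(c / u₁) then Fintype.card F * ψ (u₂ * y) else 0 := by
    calc ∑ x : F, ψ (c * x / y + (u₁ * x + u₂ * y))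
        = (∑ x : F, ψ (x * (c / y + u₁))) * ψ (u₂ * y) := by
          rw [Finset.sum_mul]
          refine Finset.sum_congr rfl fun x _ => ?_
          rw [← AddChar.map_add_eq_mul]
          congr 1
          ring
      _ = _ := by
          rw [AddChar.sum_mulShift _ hψ, div_add_eq_zero_iff_eq_neg_div hc]
          rw [apply_ite Nat.cast, ite_mul, Nat.cast_zero, zero_mul]
  rw [Fintype.sum_prod_type, Finset.sum_comm]
  simp only [inner, Finset.sum_ite_eq', Finset.mem_univ, if_true]

end InverseSum

theorem zeta_four : zeta 4 = I := by
  have : 2 * (Real.pi : ℂ) * I / ((4 : ℕ) : ℂ) = (Real.pi / 2 : ℝ) * I := by push_cast; ring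
  rw [zeta, this, exp_mul_I, ← ofReal_cos, ← ofReal_sin, Real.cos_pi_div_two, Real.sin_pi_div_two]
  simp

theorem ZMod.eq_zero_or_eq_one_of_two (s : ZMod 2) : s = 0 ∨ s = 1 := by
  revert s; decide

theorem ZMod.val_natCast_add_two_mul (s t : ZMod 2) :
    ((s.val : ZMod 4) + 2 * (t.val : ZMod 4)).val = s.val + 2 * t.val := by
  revert s t; decide

theorem I_pow_val_add_two_mul (s t : ZMod 2) :
    I ^ ((s.val : ZMod 4) + 2 * (t.val : ZMod 4)).val
      = (1 + I) / 2 * (-1) ^ t.val + (1 - I) / 2 * (-1) ^ (s + t).val := by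
  rw [ZMod.val_natCast_add_two_mul]
  rcases s.eq_zero_or_eq_one_of_two with rfl | rfl <;>
    rcases t.eq_zero_or_eq_one_of_two with rfl | rfl <;>
    simp [show (1 + 1 : ZMod 2) = 0 from rfl, ZMod.val_one, pow_succ] <;> ring

theorem norm_half_one_add_I_mul_add (s t : ZMod 2) :
    ‖(1 + I) / 2 * (-1) ^ s.val + (1 - I) / 2 * (-1) ^ t.val‖ = 1 := by
  rcases s.eq_zero_or_eq_one_of_two with rfl | rfl <;>
    rcases t.eq_zero_or_eq_one_of_two with rfl | rfl <;>
    simp [ZMod.val_one] <;> ring_nf <;> simp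

noncomputable def traceChar (m : ℕ) : AddChar (GaloisField 2 m) ℂ :=
  (AddChar.zmodChar 2 (by norm_num : (-1 : ℂ) ^ 2 = 1)).compAddMonoidHom
    (Algebra.trace (ZMod 2) (GaloisField 2 m)).toAddMonoidHom

theorem traceChar_apply (m : ℕ) (w : GaloisField 2 m) :
    traceChar m w = (-1) ^ (tr m w).val := rfl

theorem traceChar_isPrimitive (m : ℕ) : (traceChar m).IsPrimitive := by
  refine AddChar.IsPrimitive.of_ne_one fun h => ?_
  obtain ⟨z, hz⟩ := Algebra.trace_surjective (ZMod 2) (GaloisField 2 m) 1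
  have := DFunLike.congr_fun h z
  rw [traceChar_apply, tr, hz, AddChar.one_apply] at this
  norm_num [ZMod.val_one] at this

theorem tr_add (m : ℕ) (v w : GaloisField 2 m) : tr m (v + w) = tr m v + tr m w :=
  map_add _ v w

theorem gWHT2_eq_of_eq_tr_add_two_mul_tr {m : ℕ} (a b : GaloisField 2 m)
    (f : GaloisField 2 m × GaloisField 2 m → ZMod 4)
    (hf : ∀ x y, f (x, y) =
      ((tr m (a * x / y)).val : ZMod 4) + 2 * ((tr m (b * x / y)).val : ZMod 4))
    (u : GaloisField 2 m × GaloisField 2 m) :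
    gWHT2 f u
      = (1 + I) / 2 * ∑ p : GaloisField 2 m × GaloisField 2 m,
            traceChar m (b * p.1 / p.2 + (u.1 * p.1 + u.2 * p.2))
        + (1 - I) / 2 * ∑ p : GaloisField 2 m × GaloisField 2 m,
            traceChar m ((a + b) * p.1 / p.2 + (u.1 * p.1 + u.2 * p.2)) := by
  rw [gWHT2, Finset.mul_sum, Finset.mul_sum, ← Finset.sum_add_distrib]
  refine Finset.sum_congr rfl fun ⟨x, y⟩ _ => ?_
  rw [hf, zeta_four, I_pow_val_add_two_mul, ← tr_add, ← traceChar_apply, ← traceChar_apply,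
    ← traceChar_apply, add_mul, mul_assoc, mul_assoc, ← AddChar.map_add_eq_mul,
    ← AddChar.map_add_eq_mul, add_mul a b, add_div (a * x)]

theorem stmt4_general (m : ℕ) (hm : 0 < m) (a b : GaloisField 2 m)
    (hb : b ≠ 0) (hab : a ≠ b)
    (f : GaloisField 2 m × GaloisField 2 m → ZMod 4)
    (hf : ∀ x y, f (x, y) =
      ((tr m (a * x / y)).val : ZMod 4) + 2 * ((tr m (b * x / y)).val : ZMod 4)) :
    ∀ u, ‖gWHT2 f u‖ = (2 : ℝ) ^ m := by
  rintro ⟨u₁, u₂⟩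
  have hab' : a + b ≠ 0 := fun h => hab (CharTwo.add_eq_zero.mp h)
  have hψ := traceChar_isPrimitive m
  rw [gWHT2_eq_of_eq_tr_add_two_mul_tr a b f hf, AddChar.sum_mul_div_add_eq hψ hb,
    AddChar.sum_mul_div_add_eq hψ hab', traceChar_apply, traceChar_apply, mul_left_comm,
    mul_left_comm ((1 - I) / 2), ← mul_add, norm_mul, norm_half_one_add_I_mul_add, mul_one,
    norm_natCast, ← Nat.card_eq_fintype_card, GaloisField.card 2 m hm.ne']
  norm_num

/-- for distinct `a, b ∈ 𝔽_{2^m}^*`, the function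
`f(x,y) = Tr_m(ax/y) + 2 Tr_m(bx/y) : 𝔽_{2^m} × 𝔽_{2^m} → ℤ₄` is gbent. -/
theorem stmt4 (m : ℕ) (hm : 0 < m) (a b : GaloisField 2 m)
    (ha : a ≠ 0) (hb : b ≠ 0) (hab : a ≠ b)
    (f : GaloisField 2 m × GaloisField 2 m → ZMod 4)
    (hf : ∀ x y, f (x, y) =
      ((tr m (a * x / y)).val : ZMod 4) + 2 * ((tr m (b * x / y)).val : ZMod 4)) :
    ∀ u, ‖gWHT2 f u‖ = (2 : ℝ) ^ m :=
  stmt4_general m hm a b hb hab f hf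
end

section
/- Let q = 2^t with t ≥ 1 and let n be even. Then every gbent function f : 𝔽₂ⁿ → ℤ_{2^t} is regular; that is, for every u ∈ 𝔽₂ⁿ there exists j_u ∈ ℤ_{2^t} such that H_f(u) = 2^{n/2} ζ^{j_u}, where ζ = e^{2πi/2^t}. -/
open scoped BigOperators

/-!
In `ℤ[ζ]`, `ζ` a primitive `2^t`-th root of unity, the prime `2` is totally ramified:
`2 ~ (ζ - 1)^(2^(t-1))`, and every field automorphism fixes the prime `ζ - 1` up to a unit.
Since `H_f(u) ∈ ℤ[ζ]` and `H_f(u) · conj H_f(u) = 2^n`, unique factorisation forces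
`H_f(u) = 2^(n/2) ε` for a unit `ε` with `ε · conj ε = 1`. The Galois group being abelian,
complex conjugation commutes with every embedding into `ℂ`, so all archimedean absolute values
of `ε` equal `1` and `ε` is a root of unity; the roots of unity of `ℚ(ζ)` are the powers of `ζ`.
-/

open NumberField NumberField.ComplexEmbedding NumberField.Units Polynomial

theorem associated_pow_of_mul_map_associated_pow {M : Type*} [CommMonoidWithZero M]
    [IsCancelMulZero M] {p a : M} (hp : Prime p) (σ : M →* M) (hσ : Associated (σ p) p) {m : ℕ}
    (h : Associated (a * σ a) (p ^ (2 * m))) : Associated a (p ^ m) := by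
  obtain ⟨j, -, hj⟩ := (dvd_prime_pow hp _).mp ((dvd_mul_right a _).trans h.dvd)
  have hσj : Associated (σ a) (p ^ j) := (hj.map σ).trans (by rw [map_pow]; exact hσ.pow_pow)
  have h2 : Associated (p ^ (2 * j)) (p ^ (2 * m)) := by
    rw [two_mul, pow_add]
    exact (hj.mul_mul hσj).symm.trans h
  have hjm : j = m := by
    have := le_antisymm ((pow_dvd_pow_iff hp.ne_zero hp.not_isUnit).mp h2.dvd)
      ((pow_dvd_pow_iff hp.ne_zero hp.not_isUnit).mp h2.symm.dvd)
    omega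
  rwa [hjm] at hj

open scoped IsMulCommutative in
theorem NumberField.ComplexEmbedding.exists_forall_isConj_of_isAbelianGalois (K : Type*) [Field K]
    [NumberField K] [IsAbelianGalois ℚ K] :
    ∃ σ : Gal(K/ℚ), ∀ φ : K →+* ℂ, IsConj φ σ := by
  let φ : K →+* ℂ := Classical.choice inferInstance
  obtain ⟨σ, hσ⟩ := exists_comp_symm_eq_of_comp_eq (k := ℚ) φ (conjugate φ) (Subsingleton.elim _ _)
  refine ⟨σ.symm, fun ψ => ?_⟩
  obtain ⟨ν, rfl⟩ := exists_comp_symm_eq_of_comp_eq (k := ℚ) φ ψ (Subsingleton.elim _ _)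
  have hφ : IsConj φ σ.symm := hσ.symm
  rw [show σ.symm = ν.symm⁻¹ * σ.symm * ν.symm by simp]
  exact hφ.comp _

theorem NumberField.Units.mem_torsion_of_mul_eq_one {K : Type*} [Field K] [NumberField K]
    {σ : Gal(K/ℚ)} (hσ : ∀ φ : K →+* ℂ, IsConj φ σ) {u : (𝓞 K)ˣ} (hu : (u : K) * σ u = 1) :
    u ∈ torsion K := by
  refine (mem_torsion K).mpr fun w => ?_
  have h := congrArg w.embedding hu
  rw [map_mul, (hσ _).eq, map_one, RCLike.star_def, Complex.mul_conj'] at h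
  rw [← InfinitePlace.norm_embedding_eq]
  exact (pow_eq_one_iff_of_nonneg (norm_nonneg _) two_ne_zero).mp (by exact_mod_cast h)

namespace IsPrimitiveRoot

section PrimePower

variable {p k : ℕ} [Fact p.Prime] {K : Type*} [Field K] {ζ : K}
  (hζ : IsPrimitiveRoot ζ (p ^ (k + 1)))
include hζ

theorem associated_prime_toInteger_sub_one_pow :
    Associated (p : 𝓞 K) ((hζ.toInteger - 1) ^ (p ^ k * (p - 1))) := by
  rw [← eval_one_cyclotomic_prime_pow (R := 𝓞 K) (p := p),
    cyclotomic_eq_prod_X_sub_primitiveRoots hζ.toInteger_isPrimitiveRoot, eval_prod]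
  simp only [eval_sub, eval_X, eval_C]
  rw [← Nat.totient_prime_pow_succ Fact.out, ← hζ.toInteger_isPrimitiveRoot.card_primitiveRoots,
    ← Finset.prod_const]
  refine Associated.prod _ _ _ fun η hη ↦ ?_
  have hη' : IsPrimitiveRoot (η : K) (p ^ (k + 1)) :=
    (isPrimitiveRoot_of_mem_primitiveRoots hη).map_of_injective RingOfIntegers.coe_injective
  simpa using
    (IsCyclotomicExtension.Rat.associated_sub_one_of_isPrimitiveRoot _ hζ hη').neg_right.symm

theorem associated_map_toInteger_sub_one (τ : K →+* K) :
    Associated (RingOfIntegers.mapRingHom τ (hζ.toInteger - 1)) (hζ.toInteger - 1) := by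
  have hτ : IsPrimitiveRoot (τ ζ) (p ^ (k + 1)) := hζ.map_of_injective τ.injective
  convert (IsCyclotomicExtension.Rat.associated_sub_one_of_isPrimitiveRoot _ hζ hτ).symm
  ext
  simp only [map_sub, map_one, RingOfIntegers.mapRingHom_apply]
  rfl

theorem associated_prime_pow_of_mul_map [CharZero K] [IsCyclotomicExtension {p ^ (k + 1)} ℚ K]
    (τ : K →+* K) {a : 𝓞 K} {s : ℕ}
    (h : Associated (a * RingOfIntegers.mapRingHom τ a) (p ^ (2 * s))) :
    Associated a (p ^ s) := by
  have hpow (n : ℕ) : Associated ((p : 𝓞 K) ^ n) ((hζ.toInteger - 1) ^ (p ^ k * (p - 1) * n)) := by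
    rw [pow_mul]
    exact hζ.associated_prime_toInteger_sub_one_pow.pow_pow
  refine (associated_pow_of_mul_map_associated_pow hζ.zeta_sub_one_prime
    (RingOfIntegers.mapRingHom τ : 𝓞 K →* 𝓞 K) (hζ.associated_map_toInteger_sub_one τ)
    (h.trans ?_)).trans (hpow s).symm
  rw [mul_left_comm]
  exact hpow _

end PrimePower

theorem exists_pow_eq_of_mem_torsion {n : ℕ} [NeZero n] {K : Type*} [Field K]
    [NumberField K] [IsCyclotomicExtension {n} ℚ K] {ζ : K} (hζ : IsPrimitiveRoot ζ n)
    (hn : Even n) {u : (𝓞 K)ˣ} (hu : u ∈ torsion K) : ∃ i < n, ζ ^ i = u := by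
  have horder : torsionOrder K = n := by
    rw [IsCyclotomicExtension.Rat.torsionOrder_eq (n := n), if_pos hn]
  have hun : (⟨u, hu⟩ : torsion K) ^ n = 1 := horder ▸ pow_card_eq_one'
  refine hζ.eq_pow_of_pow_eq_one ?_
  simpa using congrArg (fun v : torsion K => ((v : (𝓞 K)ˣ) : K)) hun

theorem exists_ringHom_apply_eq {n : ℕ} [NeZero n] {K : Type*} [Field K]
    [CharZero K] [IsCyclotomicExtension {n} ℚ K] {ζ : K} (hζ : IsPrimitiveRoot ζ n) {z : ℂ}
    (hz : IsPrimitiveRoot z n) : ∃ φ : K →+* ℂ, φ ζ = z := by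
  have hirr := cyclotomic.irreducible_rat (NeZero.pos n)
  refine ⟨(hζ.embeddingsEquivPrimitiveRoots ℂ hirr).symm
    ⟨z, (mem_primitiveRoots (NeZero.pos n)).mpr hz⟩, ?_⟩
  simp [← hζ.embeddingsEquivPrimitiveRoots_apply_coe ℂ hirr]

theorem exists_eq_two_pow_mul_pow_of_norm_eq {k : ℕ} {K : Type*} [Field K]
    [NumberField K] [IsCyclotomicExtension {2 ^ (k + 1)} ℚ K] {ζ : K}
    (hζ : IsPrimitiveRoot ζ (2 ^ (k + 1))) (φ : K →+* ℂ) {a : 𝓞 K} {s : ℕ}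
    (ha : ‖φ a‖ = 2 ^ s) : ∃ i < 2 ^ (k + 1), (a : K) = 2 ^ s * ζ ^ i := by
  have := IsCyclotomicExtension.isAbelianGalois {2 ^ (k + 1)} ℚ K
  obtain ⟨σ, hσ⟩ := exists_forall_isConj_of_isAbelianGalois K
  have hK : (a : K) * σ a = 2 ^ (2 * s) := by
    apply φ.injective
    rw [map_mul, (hσ φ).eq, RCLike.star_def, Complex.mul_conj', ha, map_pow, map_ofNat, pow_mul']
    norm_num
  have hO : a * RingOfIntegers.mapRingHom (σ : K →+* K) a = (2 : ℕ) ^ (2 * s) := by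
    apply RingOfIntegers.coe_injective
    simpa [RingOfIntegers.coe_eq_algebraMap, map_ofNat] using hK
  have : Fact (Nat.Prime 2) := ⟨Nat.prime_two⟩
  obtain ⟨u, hu⟩ := (hζ.associated_prime_pow_of_mul_map _ (.of_eq hO)).symm
  replace hu : (a : K) = 2 ^ s * u := by simp [RingOfIntegers.coe_eq_algebraMap, map_ofNat, ← hu]
  have hu1 : (u : K) * σ u = 1 := by
    have h2 : (2 : K) ^ (2 * s) * ((u : K) * σ u) = a * σ a := by
      rw [hu, map_mul, map_pow, map_ofNat]
      ring
    rw [hK] at h2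
    exact (mul_eq_left₀ (pow_ne_zero _ two_ne_zero)).mp h2
  obtain ⟨i, hi, hiu⟩ := hζ.exists_pow_eq_of_mem_torsion (Nat.even_pow.mpr ⟨even_two, by omega⟩)
    (mem_torsion_of_mul_eq_one hσ hu1)
  exact ⟨i, hi, by rw [hu, hiu]⟩

theorem exists_eq_two_pow_mul_pow_of_mem_adjoin {k s : ℕ} {z : ℂ}
    (hz : IsPrimitiveRoot z (2 ^ (k + 1))) {α : ℂ} (hα : α ∈ Algebra.adjoin ℤ {z})
    (hnorm : ‖α‖ = 2 ^ s) : ∃ i < 2 ^ (k + 1), α = 2 ^ s * z ^ i := by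
  let K := CyclotomicField (2 ^ (k + 1)) ℚ
  have : IsCyclotomicExtension {2 ^ (k + 1)} ℚ K := CyclotomicField.isCyclotomicExtension _ ℚ
  have := IsCyclotomicExtension.numberField {2 ^ (k + 1)} ℚ K
  have hζ := IsCyclotomicExtension.zeta_spec (2 ^ (k + 1)) ℚ K
  obtain ⟨φ, hφ⟩ := hζ.exists_ringHom_apply_eq hz
  let ψ : 𝓞 K →ₐ[ℤ] ℂ := (φ.comp (algebraMap (𝓞 K) K)).toIntAlgHom
  have hψ : ψ '' {hζ.toInteger} = {z} := by rw [Set.image_singleton, ← hφ]; rfl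
  obtain ⟨a, -, rfl⟩ : α ∈ (Algebra.adjoin ℤ {hζ.toInteger}).map ψ := by
    rwa [← Algebra.adjoin_image, hψ]
  obtain ⟨i, hi, ha⟩ := hζ.exists_eq_two_pow_mul_pow_of_norm_eq φ hnorm
  exact ⟨i, hi, by simpa [ψ, hφ, RingOfIntegers.coe_eq_algebraMap, map_ofNat] using congrArg φ ha⟩

end IsPrimitiveRoot

theorem isPrimitiveRoot_zeta {q : ℕ} (hq : q ≠ 0) : IsPrimitiveRoot (zeta q) q :=
  Complex.isPrimitiveRoot_exp q hq

theorem gWHT_mem_adjoin {n q : ℕ} (f : (Fin n → ZMod 2) → ZMod q) (u : Fin n → ZMod 2) :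
    gWHT f u ∈ Algebra.adjoin ℤ {zeta q} :=
  Subalgebra.sum_mem _ fun _ _ => Subalgebra.mul_mem _
    (Subalgebra.pow_mem _ (Algebra.self_mem_adjoin_singleton ℤ _) _)
    (Subalgebra.pow_mem _ (Subalgebra.neg_mem _ (Subalgebra.one_mem _)) _)

/-- every gbent function `f : 𝔽₂ⁿ → ℤ_{2^t}` (`n` even) is regular:
`H_f(u) = 2^{n/2} ζ^{j_u}` for some `j_u ∈ ℤ_{2^t}`, for all `u`. -/
theorem stmt9 (n t : ℕ) (ht : 1 ≤ t) (hn : Even n)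
    (f : (Fin n → ZMod 2) → ZMod (2 ^ t)) (hf : IsGbent f) :
    ∀ u, ∃ j : ZMod (2 ^ t),
      gWHT f u = (((2 : ℝ) ^ ((n : ℝ) / 2) : ℝ) : ℂ) * zeta (2 ^ t) ^ j.val := by
  obtain ⟨k, rfl⟩ : ∃ k, t = k + 1 := ⟨t - 1, by omega⟩
  obtain ⟨s, rfl⟩ : ∃ s, n = 2 * s := hn.exists_two_nsmul n
  have hnorm : (2 : ℝ) ^ (((2 * s : ℕ) : ℝ) / 2) = 2 ^ s := by
    rw [Nat.cast_mul, Nat.cast_two, mul_div_cancel_left₀ _ two_ne_zero, Real.rpow_natCast]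
  intro u
  obtain ⟨i, hi, hu⟩ := IsPrimitiveRoot.exists_eq_two_pow_mul_pow_of_mem_adjoin
    (isPrimitiveRoot_zeta (by positivity)) (gWHT_mem_adjoin f u) ((hf u).trans hnorm)
  refine ⟨i, ?_⟩
  rw [ZMod.val_cast_of_lt hi, hu, hnorm]
  norm_num
end

section
/- Let n, m, t be positive integers with m = n/(2t), let q = 2^t, and let U₀, U₁, …, U_{2^{n/2}} be the 2^{n/2} + 1 elements of a spread of 𝔽₂ⁿ. Let φ : {1, 2, …, 2^{n/2}} → ℤ_{2^t}^m be a bijection with coordinates φ(s) = (φ₁(s), …, φ_m(s)), and define f_j : 𝔽₂ⁿ → ℤ_{2^t} for 1 ≤ j ≤ m by f_j(x) = φ_j(s) if x ∈ U_s with 1 ≤ s ≤ 2^{n/2} and x ≠ 0, and f_j(x) = 0 if x ∈ U₀. Then F = (f₁, …, f_m) : 𝔽₂ⁿ → ℤ_{2^t}^m is a vectorial gbent function. -/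
open scoped BigOperators

/-!
Every nonzero vector lies in exactly one member `Uᵢ` of the spread. Hence if `f` vanishes at `0`,
equals `aᵢ` on `Uᵢ ∖ {0}`, and `∑ᵢ ψ(aᵢ) = 1`, its transform collapses to
`H_f(u) = ∑ᵢ ψ(aᵢ) ∑_{x ∈ Uᵢ} χᵤ(x)`. For the component `c · F` this holds: `a₀ = 0`, and since `φ`
is a bijection, `∑ₛ ψ(c · φ(s))` is the full sum of the character `y ↦ ψ(c · y)`, nontrivial for
`c ≠ 0`. Each inner sum is `|Uᵢ| = 2^{n/2}` if `χᵤ` is trivial on `Uᵢ` and `0` otherwise, and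
comparing with `∑ₓ χᵤ(x) = 0` shows that for `u ≠ 0` exactly one inner sum survives. So
`|H_f(u)| = 2^{n/2}`; for `u = 0` all inner sums equal `2^{n/2}` and the weights add up to `1`.
-/

open Finset Function

section Partition

variable {G ι : Type*} [AddCommGroup G] [Fintype G] [Fintype ι]

open scoped Classical

lemma sum_sub_apply_zero_eq_of_partition {M : Type*} [AddCommGroup M] {H : ι → AddSubgroup G}
    (hdisj : Pairwise (Disjoint on H)) (hcover : ∀ x, ∃ i, x ∈ H i) (g : G → M) :
    ∑ i, (∑ x : H i, g x - g 0) = ∑ x, g x - g 0 := by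
  have hpiece : ∀ i, ∑ x : H i, g x - g 0 = ∑ x, if x ∈ H i ∧ x ≠ 0 then g x else 0 := by
    intro i
    rw [← Finset.sum_filter, show univ.filter (fun x => x ∈ H i ∧ x ≠ 0) =
        (univ.filter (· ∈ H i)).erase 0 by ext; simp [and_comm],
      Finset.sum_erase_eq_sub (by simp [(H i).zero_mem]),
      Finset.sum_subtype (p := (· ∈ H i)) _ (fun x => by simp) g]
  have hunique : ∀ x, (∑ i, if x ∈ H i ∧ x ≠ 0 then g x else 0) = if x ≠ 0 then g x else 0 := by
    intro x
    split_ifs with hx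
    · obtain ⟨i, hi⟩ := hcover x
      rw [Finset.sum_eq_single i]
      · simp [hi, hx]
      · intro j _ hji
        rw [if_neg]
        exact fun hj => hx ((AddSubgroup.disjoint_def.mp (hdisj hji)) hj.1 hi)
      · simp
    · simp [hx]
  rw [Finset.sum_congr rfl fun i _ => hpiece i, Finset.sum_comm,
    Finset.sum_congr rfl fun x _ => hunique x, ← Finset.sum_filter, Finset.filter_ne',
    Finset.sum_erase_eq_sub (Finset.mem_univ _)]

lemma AddChar.sum_subgroup_eq_ite {R : Type*} [CommRing R] [IsDomain R] (ψ : AddChar G R)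
    (K : AddSubgroup G) :
    ∑ x : K, ψ x = if ∀ x ∈ K, ψ x = 1 then (Nat.card K : R) else 0 := by
  simpa [AddChar.eq_zero_iff, Nat.card_eq_fintype_card] using
    AddChar.sum_eq_ite (ψ.compAddMonoidHom K.subtype)

lemma sum_mul_eq_of_partition {A R : Type*} [AddGroup A] [CommRing R] {H : ι → AddSubgroup G}
    (hdisj : Pairwise (Disjoint on H)) (hcover : ∀ x, ∃ i, x ∈ H i)
    (ψ : AddChar A R) (χ : AddChar G R) {f : G → A} {a : ι → A} (hf0 : f 0 = 0)
    (hf : ∀ i, ∀ x ∈ H i, x ≠ 0 → f x = a i) (ha : ∑ i, ψ (a i) = 1) :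
    ∑ x, ψ (f x) * χ x = ∑ i, ψ (a i) * ∑ x : H i, χ x := by
  have hpiece : ∀ i, ∑ x : H i, ψ (f x) * χ x - ψ (f 0) * χ 0 =
      ψ (a i) * ∑ x : H i, χ x - ψ (a i) := by
    intro i
    calc ∑ x : H i, ψ (f x) * χ x - ψ (f 0) * χ 0
        = ∑ x ∈ (univ : Finset (H i)).erase 0, ψ (f x) * χ x := by
          rw [Finset.sum_erase_eq_sub (mem_univ 0), AddSubgroup.coe_zero]
      _ = ψ (a i) * ∑ x ∈ (univ : Finset (H i)).erase 0, χ x := by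
          rw [Finset.mul_sum]
          refine Finset.sum_congr rfl fun x hx => ?_
          rw [hf i x x.2 (by simpa using hx)]
      _ = ψ (a i) * ∑ x : H i, χ x - ψ (a i) := by
          rw [Finset.sum_erase_eq_sub (mem_univ 0), AddSubgroup.coe_zero, AddChar.map_zero_eq_one,
            mul_sub, mul_one]
  have hsum := sum_sub_apply_zero_eq_of_partition hdisj hcover fun x => ψ (f x) * χ x
  rw [Finset.sum_congr rfl fun i _ => hpiece i, Finset.sum_sub_distrib, ha, hf0,
    AddChar.map_zero_eq_one, AddChar.map_zero_eq_one, mul_one] at hsum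
  linear_combination -hsum

end Partition

structure IsSpread {G ι : Type*} [AddCommGroup G] (H : ι → AddSubgroup G) (N : ℕ) : Prop where
  disjoint : Pairwise (Disjoint on H)
  card_eq : ∀ i, Nat.card (H i) = N
  card_index : Nat.card ι = N + 1
  card_group : Nat.card G = N ^ 2

theorem IsSpread.of_finrank {K V ι : Type*} [Field K] [Finite K] [AddCommGroup V] [Module K V]
    [Finite V] {W : ι → Submodule K V} {k : ℕ} (hV : Module.finrank K V = 2 * k)
    (hW : ∀ i, Module.finrank K (W i) = k) (hdisj : Pairwise (Disjoint on W))
    (hι : Nat.card ι = Nat.card K ^ k + 1) :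
    IsSpread (fun i => (W i).toAddSubgroup) (Nat.card K ^ k) where
  disjoint i j hij := AddSubgroup.disjoint_def.mpr fun hi hj =>
    Submodule.disjoint_def.mp (hdisj hij) _ hi hj
  card_eq i := by
    rw [← hW i, ← Module.natCard_eq_pow_finrank]
    rfl
  card_index := hι
  card_group := by rw [Module.natCard_eq_pow_finrank (K := K), hV, pow_mul']

namespace IsSpread

variable {G ι : Type*} [AddCommGroup G] [Fintype G] [Fintype ι] {H : ι → AddSubgroup G}
  {N : ℕ}

open scoped Classical

theorem exists_mem (hH : IsSpread H N) (x : G) : ∃ i, x ∈ H i := by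
  by_contra! hx
  obtain ⟨i₀⟩ : Nonempty ι := Nat.card_pos_iff.mp (by rw [hH.card_index]; omega) |>.1
  have hx0 : x ≠ 0 := fun h => hx i₀ (h ▸ (H i₀).zero_mem)
  have hN : 2 ≤ N := by
    have h1 : 1 < N ^ 2 := hH.card_group ▸ Finite.one_lt_card_iff_nontrivial.mpr ⟨0, x, hx0.symm⟩
    nlinarith
  -- the `N + 1` disjoint punctured members would have `N ^ 2 - 1` elements, all outside `{0, x}`
  let A : ι → Finset G := fun i => (univ.filter (· ∈ H i)).erase 0
  have hA : ∀ i, (A i).card = N - 1 := fun i => by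
    rw [Finset.card_erase_of_mem (by simp [(H i).zero_mem]), ← hH.card_eq i,
      Nat.card_eq_fintype_card, Fintype.card_subtype]
  have hdisjA : (↑(univ : Finset ι) : Set ι).PairwiseDisjoint A := fun i _ j _ hij =>
    Finset.disjoint_left.mpr fun y hyi hyj => by
      simp only [A, Finset.mem_erase, Finset.mem_filter] at hyi hyj
      exact hyi.1 (AddSubgroup.disjoint_def.mp (hH.disjoint hij) hyi.2.2 hyj.2.2)
  have hsub : univ.biUnion A ⊆ (univ.erase x).erase 0 := fun y hy => by
    obtain ⟨i, -, hy⟩ := Finset.mem_biUnion.mp hy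
    simp only [A, Finset.mem_erase, Finset.mem_filter] at hy
    simp only [Finset.mem_erase, Finset.mem_univ, and_true]
    exact ⟨hy.1, fun h => hx i (h ▸ hy.2.2)⟩
  have hle := Finset.card_le_card hsub
  rw [Finset.card_biUnion hdisjA, Finset.sum_congr rfl fun i _ => hA i, Finset.sum_const,
    Finset.card_univ, ← Nat.card_eq_fintype_card, hH.card_index,
    Finset.card_erase_of_mem (by simpa using hx0.symm), Finset.card_erase_of_mem (mem_univ x),
    Finset.card_univ, ← Nat.card_eq_fintype_card, hH.card_group, smul_eq_mul] at hle
  rw [Nat.sub_sub] at hle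
  zify [show 1 ≤ N by omega, show 2 ≤ N ^ 2 by nlinarith] at hle
  nlinarith

theorem existsUnique_forall_eq_one (hH : IsSpread H N) {χ : AddChar G ℂ} (hχ : χ ≠ 0) :
    ∃! i, ∀ x ∈ H i, χ x = 1 := by
  have hsum := sum_sub_apply_zero_eq_of_partition hH.disjoint hH.exists_mem χ
  simp only [AddChar.sum_subgroup_eq_ite, hH.card_eq, AddChar.sum_eq_zero_iff_ne_zero.mpr hχ,
    AddChar.map_zero_eq_one, Finset.sum_sub_distrib, ← Finset.sum_filter, Finset.sum_const,
    nsmul_eq_mul, Finset.card_univ, ← Nat.card_eq_fintype_card, hH.card_index] at hsum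
  -- `hsum` now reads `#{i | χ trivial on H i} * N - (N + 1) = -1`
  have hN : (N : ℂ) ≠ 0 := by
    have := hH.card_group ▸ Nat.card_pos (α := G)
    exact_mod_cast (pow_pos_iff two_ne_zero).mp this |>.ne'
  have hcard : #{i | ∀ x ∈ H i, χ x = 1} = 1 := by
    have : (#{i | ∀ x ∈ H i, χ x = 1} : ℂ) = 1 :=
      mul_right_cancel₀ hN (by push_cast at hsum; linear_combination hsum)
    exact_mod_cast this
  obtain ⟨i, hi⟩ := Finset.card_eq_one.mp hcard
  have hiff : ∀ j, (∀ x ∈ H j, χ x = 1) ↔ j = i := fun j => by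
    simpa using Finset.ext_iff.mp hi j
  exact ⟨i, (hiff i).2 rfl, fun j hj => (hiff j).1 hj⟩

theorem norm_sum_mul_eq (hH : IsSpread H N) {A : Type*} [AddGroup A] [Finite A]
    (ψ : AddChar A ℂ) (χ : AddChar G ℂ) {f : G → A} {a : ι → A} (hf0 : f 0 = 0)
    (hf : ∀ i, ∀ x ∈ H i, x ≠ 0 → f x = a i) (ha : ∑ i, ψ (a i) = 1) :
    ‖∑ x, ψ (f x) * χ x‖ = N := by
  rw [sum_mul_eq_of_partition hH.disjoint hH.exists_mem ψ χ hf0 hf ha]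
  simp only [AddChar.sum_subgroup_eq_ite, hH.card_eq]
  by_cases hχ : χ = 0
  · simp [hχ, ← Finset.sum_mul, ha]
  · obtain ⟨i, hi, huniq⟩ := hH.existsUnique_forall_eq_one hχ
    rw [Finset.sum_eq_single i (fun j _ hji => by rw [if_neg fun h => hji (huniq j h), mul_zero])
      (by simp), if_pos hi, norm_mul, AddChar.norm_apply, one_mul, Complex.norm_natCast]
end IsSpread

lemma Pairwise.disjoint_option_elim {ι α : Type*} [PartialOrder α] [OrderBot α] {a : α}
    {f : ι → α} (hf : Pairwise (Disjoint on f)) (ha : ∀ i, Disjoint a (f i)) :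
    Pairwise (Disjoint on fun o : Option ι => o.elim a f) := by
  rintro (_ | i) (_ | j) hij <;> simp only [onFun, Option.elim]
  · exact absurd rfl hij
  · exact ha j
  · exact (ha i).symm
  · exact hf fun h => hij (congrArg some h)

def dotProductChar {R M m : Type*} [Fintype m] [CommRing R] [CommMonoid M] (ψ : AddChar R M)
    (c : m → R) : AddChar (m → R) M where
  toFun v := ψ (c ⬝ᵥ v)
  map_zero_eq_one' := by simp
  map_add_eq_mul' v w := by simp [dotProduct_add, AddChar.map_add_eq_mul]

lemma dotProductChar_ne_zero {R M m : Type*} [Fintype m] [DecidableEq m] [CommRing R]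
    [CommMonoid M] {ψ : AddChar R M} (hψ : ψ.IsPrimitive) {c : m → R} (hc : c ≠ 0) :
    dotProductChar ψ c ≠ 0 := by
  obtain ⟨j, hj⟩ := Function.ne_iff.mp hc
  obtain ⟨r, hr⟩ := AddChar.ne_one_iff.mp (hψ hj)
  exact AddChar.ne_zero_iff.mpr
    ⟨Pi.single j r, by simpa [dotProductChar, dotProduct_single] using hr⟩

lemma zeta_pow_val (q : ℕ) [NeZero q] (a : ZMod q) : zeta q ^ a.val = ZMod.stdAddChar a := by
  rw [ZMod.stdAddChar_apply, ZMod.toCircle_apply, zeta, ← Complex.exp_nat_mul]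
  ring_nf

lemma neg_one_pow_val (a : ZMod 2) : (-1 : ℂ) ^ a.val = ZMod.stdAddChar a := by
  rw [← zeta_pow_val, zeta, Nat.cast_two, mul_assoc, mul_div_assoc,
    mul_div_cancel₀ _ two_ne_zero, Complex.exp_pi_mul_I]

lemma gWHT_eq_sum_stdAddChar {n q : ℕ} [NeZero q] (f : (Fin n → ZMod 2) → ZMod q)
    (u : Fin n → ZMod 2) :
    gWHT f u = ∑ x, ZMod.stdAddChar (f x) * dotProductChar ZMod.stdAddChar u x := by
  simp only [gWHT, zeta_pow_val, neg_one_pow_val]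
  rfl

lemma Real.two_rpow_div_two {n : ℕ} (hn : Even n) : (2 : ℝ) ^ ((n : ℝ) / 2) = 2 ^ (n / 2) := by
  obtain ⟨k, rfl⟩ := hn
  rw [show ((k + k : ℕ) : ℝ) / 2 = k by push_cast; ring, Real.rpow_natCast]
  congr 1
  omega

theorem stmt13_general (n t m : ℕ) (hn : n = 2 * t * m)
    (U0 : Submodule (ZMod 2) (Fin n → ZMod 2))
    (U : Fin (2 ^ (n / 2)) → Submodule (ZMod 2) (Fin n → ZMod 2))
    (hdim0 : Module.finrank (ZMod 2) U0 = n / 2)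
    (hdim : ∀ s, Module.finrank (ZMod 2) (U s) = n / 2)
    (hint : ∀ s s', s ≠ s' → U s ⊓ U s' = ⊥)
    (hint0 : ∀ s, U0 ⊓ U s = ⊥)
    (φ : Fin (2 ^ (n / 2)) → Fin m → ZMod (2 ^ t)) (hφ : Function.Bijective φ)
    (F : (Fin n → ZMod 2) → Fin m → ZMod (2 ^ t))
    (hF1 : ∀ s, ∀ x ∈ U s, x ≠ 0 → F x = φ s)
    (hF0 : ∀ x ∈ U0, F x = 0) :
    IsVectorialGbent F := by
  have hn2 : n = 2 * (n / 2) := by rw [hn, mul_assoc, Nat.mul_div_cancel_left _ two_pos]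
  have hspread : IsSpread (fun o : Option (Fin (2 ^ (n / 2))) => (o.elim U0 U).toAddSubgroup)
      (2 ^ (n / 2)) := by
    simpa [Nat.card_zmod] using IsSpread.of_finrank (K := ZMod 2) (k := n / 2)
      (by rw [Module.finrank_fin_fun]; exact hn2) (by rintro (_ | s); exacts [hdim0, hdim s])
      (Pairwise.disjoint_option_elim (fun s s' h => disjoint_iff.mpr (hint s s' h))
        fun s => disjoint_iff.mpr (hint0 s)) (by simp)
  intro c hc u
  have hφsum : ∑ s, ZMod.stdAddChar (c ⬝ᵥ φ s) = 0 := by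
    rw [Fintype.sum_bijective φ hφ (fun s => ZMod.stdAddChar (c ⬝ᵥ φ s))
      (dotProductChar ZMod.stdAddChar c) fun s => rfl]
    exact AddChar.sum_eq_zero_iff_ne_zero.mpr
      (dotProductChar_ne_zero (ZMod.isPrimitive_stdAddChar _) hc)
  show ‖gWHT (fun x => c ⬝ᵥ F x) u‖ = _
  rw [gWHT_eq_sum_stdAddChar, Real.two_rpow_div_two ⟨n / 2, by omega⟩,
    hspread.norm_sum_mul_eq _ _ (a := fun o => o.elim 0 fun s => c ⬝ᵥ φ s)
      (by simp [hF0 0 U0.zero_mem]) ?_ ?_]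
  · exact Nat.cast_pow 2 (n / 2)
  · rintro (_ | s) x hx hx0
    · simp [hF0 x hx]
    · exact congrArg _ (hF1 s x hx hx0)
  · simp [Fintype.sum_option, hφsum]

/-- the spread construction of vectorial gbent functions from
`𝔽₂ⁿ` to `ℤ_{2^t}^m` with `m = n/(2t)`: given a spread `U₀, U₁, …, U_{2^{n/2}}`
of `𝔽₂ⁿ` and a bijection `φ` of `{1, …, 2^{n/2}}` onto `ℤ_{2^t}^m`, the function
`F` equal to `φ(s)` on `U_s ∖ {0}` (`s ≥ 1`) and to `0` on `U₀` is vectorial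
gbent. -/
theorem stmt13 (n t m : ℕ) (ht : 1 ≤ t) (hm : 1 ≤ m) (hn : n = 2 * t * m)
    (U0 : Submodule (ZMod 2) (Fin n → ZMod 2))
    (U : Fin (2 ^ (n / 2)) → Submodule (ZMod 2) (Fin n → ZMod 2))
    (hdim0 : Module.finrank (ZMod 2) U0 = n / 2)
    (hdim : ∀ s, Module.finrank (ZMod 2) (U s) = n / 2)
    (hint : ∀ s s', s ≠ s' → U s ⊓ U s' = ⊥)
    (hint0 : ∀ s, U0 ⊓ U s = ⊥)
    (φ : Fin (2 ^ (n / 2)) → Fin m → ZMod (2 ^ t)) (hφ : Function.Bijective φ)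
    (F : (Fin n → ZMod 2) → Fin m → ZMod (2 ^ t))
    (hF1 : ∀ s, ∀ x ∈ U s, x ≠ 0 → F x = φ s)
    (hF0 : ∀ x ∈ U0, F x = 0) :
    IsVectorialGbent F :=
  stmt13_general n t m hn U0 U hdim0 hdim hint hint0 φ hφ F hF1 hF0
end
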